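/- A vertex v is landmark-distance affected (its r-label in the minimal highway cover labelling changes, or its distance to r changes) by a batch update if and only if its landmark distance changes: d^L_G(r,v) ≠ d^L_{G'}(r,v). -/

import Mathlib

open scoped Classical

variable {V : Type*}

namespace BatchHL

/-- `l` is a walk in `G` from `r` to `v`, given as its (nonempty) list of visited vertices. -/
def IsWalk (G : SimpleGraph V) (r v : V) (l : List V) : Prop :=
  l ≠ [] ∧ l.head? = some r ∧ l.getLast? = some v ∧ l.Chain' G.Adj

/-- The length (number of edges) of a walk given as a list of vertices. -/
def len (l : List V) : ℕ := l.length - 1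

/-- The walk `l` passes through the (undirected) edge `(a, b)`. -/
def Passes (l : List V) (a b : V) : Prop :=
  (a, b) ∈ l.zip l.tail ∨ (b, a) ∈ l.zip l.tail

/-- `P_G(r,v)`: the set of all shortest paths between `r` and `v` in `G`. -/
def SPaths (G : SimpleGraph V) (r v : V) : Set (List V) :=
  {l | IsWalk G r v l ∧ ∀ l', IsWalk G r v l' → l.length ≤ l'.length}

/-- `(a,b)` is an edge deleted by the batch update turning `G` into `G'`. -/
def DeletedEdge (G G' : SimpleGraph V) (a b : V) : Prop := G.Adj a b ∧ ¬ G'.Adj a b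

/-- `(a,b)` is an edge inserted by the batch update turning `G` into `G'`. -/
def InsertedEdge (G G' : SimpleGraph V) (a b : V) : Prop := G'.Adj a b ∧ ¬ G.Adj a b

/-- `(a,b)` is an edge of the batch update `B` turning `G` into `G'`. -/
def UpdatedEdge (G G' : SimpleGraph V) (a b : V) : Prop :=
  InsertedEdge G G' a b ∨ DeletedEdge G G' a b

/-- The walk `l` passes through a deleted edge. -/
def PassesDeleted (G G' : SimpleGraph V) (l : List V) : Prop :=
  ∃ a b, DeletedEdge G G' a b ∧ Passes l a b

/-- The walk `l` passes through an inserted edge. -/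
def PassesInserted (G G' : SimpleGraph V) (l : List V) : Prop :=
  ∃ a b, InsertedEdge G G' a b ∧ Passes l a b

/-- `v` is affected w.r.t. landmark `r` iff the set of shortest paths changes. -/
def Affected (G G' : SimpleGraph V) (r v : V) : Prop := SPaths G r v ≠ SPaths G' r v

/-- A composite path from `r` to `v`: a prefix lying in `G` followed by a suffix lying in `G'`. -/
def IsComposite (G G' : SimpleGraph V) (r v : V) (l : List V) : Prop :=
  ∃ w l₁ l₂, IsWalk G r w l₁ ∧ IsWalk G' w v l₂ ∧ l = l₁ ++ l₂.tail

/-- A significant composite path: a composite path whose `G`-prefix passes through a deleted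
edge and whose `G'`-suffix passes through an inserted edge. -/
def IsSigComposite (G G' : SimpleGraph V) (r v : V) (l : List V) : Prop :=
  ∃ w l₁ l₂, IsWalk G r w l₁ ∧ IsWalk G' w v l₂ ∧ l = l₁ ++ l₂.tail ∧
    PassesDeleted G G' l₁ ∧ PassesInserted G G' l₂

/-- `v` is composite-path affected w.r.t. `r`. -/
def CPAffected (G G' : SimpleGraph V) (r v : V) : Prop :=
  Affected G G' r v ∨ ∃ l, IsSigComposite G G' r v l ∧ (len l : ℕ∞) ≤ G.edist r v

/-- A distance labelling: each label entry `(r, δ) ∈ L v` satisfies `δ = d_G(r,v)`. -/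
def IsLabelling (G : SimpleGraph V) (L : V → Set (V × ℕ∞)) : Prop :=
  ∀ v r δ, (r, δ) ∈ L v → δ = G.edist r v

/-- A 2-hop cover labelling: a distance labelling such that every pair `s, t` has a common
hub `r` lying on a shortest path between `s` and `t`. -/
def Is2HopCover (G : SimpleGraph V) (L : V → Set (V × ℕ∞)) : Prop :=
  IsLabelling G L ∧ ∀ s t : V, ∃ r, (r, G.edist r s) ∈ L s ∧ (r, G.edist r t) ∈ L t ∧
    G.edist s r + G.edist r t = G.edist s t

/-- A highway cover labelling `Γ = (H, L)` over `G` with landmarks `R`.  The highway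
distances `δ_H(r,r_i)` are by definition the graph distances `d_G(r,r_i)`. -/
def IsHighwayCover (G : SimpleGraph V) (R : Set V) (L : V → Set (V × ℕ∞)) : Prop :=
  (∀ v r δ, (r, δ) ∈ L v → r ∈ R ∧ δ = G.edist r v) ∧
  ∀ v, v ∉ R → ∀ r ∈ R,
    G.edist r v = sInf {x | ∃ ri δ, (ri, δ) ∈ L v ∧ x = δ + G.edist r ri}

/-- The landmark length / landmark distance values: `⊤` for "no path", otherwise a pair of a
length and a landmark flag (a `Prop`). -/
abbrev LLen := WithTop (ℕ × Prop)

/-- Lexicographic order on landmark lengths, with flag ordering `True < False`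
(i.e. `x ≤ y` at equal length iff `y`'s flag implies `x`'s flag). -/
def llLe : LLen → LLen → Prop
  | _, none => True
  | none, some _ => False
  | some a, some b => a.1 < b.1 ∨ (a.1 = b.1 ∧ (b.2 → a.2))

/-- Strict lexicographic order on landmark lengths. -/
def llLt (x y : LLen) : Prop := llLe x y ∧ ¬ llLe y x

/-- The extension operator `⊕`: `(d,l) ⊕ w = (d+1, True)` if `w ∈ R∖{r}`, else `(d+1, l)`. -/
def oplus (R : Set V) (r : V) : LLen → V → LLen
  | none, _ => none
  | some a, w => some (a.1 + 1, (w ∈ R ∧ w ≠ r) ∨ a.2)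

/-- The landmark length `lml(l)` of a walk `l` starting at `r`: its length together with the
flag recording whether it passes through a landmark other than `r`. -/
def lmLen (R : Set V) (r : V) (l : List V) : LLen :=
  some (len l, ∃ w ∈ l, w ∈ R ∧ w ≠ r)

/-- The landmark distance `d^L_G(r,v)`: the lexicographically minimal landmark length of a
walk from `r` to `v` (with `True < False` on flags), `⊤` if there is none.  Explicitly, its
length component is the minimal walk length and its flag holds iff some walk of minimal
length passes through a landmark other than `r`. -/
noncomputable def lmDist (G : SimpleGraph V) (R : Set V) (r v : V) : LLen :=
  if ∃ l, IsWalk G r v l then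
    some (sInf {n | ∃ l, IsWalk G r v l ∧ len l = n},
      ∃ l, IsWalk G r v l ∧ len l = sInf {n | ∃ l', IsWalk G r v l' ∧ len l' = n} ∧
        ∃ w ∈ l, w ∈ R ∧ w ≠ r)
  else ⊤

/-- Order on extended landmark lengths `(landmark length, deletion flag)`, lexicographic with
`True < False` on the deletion flag. -/
def ellLe (x y : LLen × Prop) : Prop := llLt x.1 y.1 ∨ (x.1 = y.1 ∧ (y.2 → x.2))

/-- Strict order on extended landmark lengths. -/
def ellLt (x y : LLen × Prop) : Prop := ellLe x y ∧ ¬ ellLe y x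

/-- `β(r,v) = (d^L_G(r,v), True)`. -/
noncomputable def beta (G : SimpleGraph V) (R : Set V) (r v : V) : LLen × Prop :=
  (lmDist G R r v, True)

/-- The distance bound `d_bou(u, S)` of `u` w.r.t. `S` in `G'`. -/
noncomputable def dbou (G' : SimpleGraph V) (r : V) (S : Set V) (u : V) : ℕ∞ :=
  ⨅ (w : V) (_ : G'.Adj u w ∧ w ∉ S), (G'.edist r w + 1)

/-- The set `{ d^L_{G'}(r,w) ⊕ v | w ∈ N_{G'}(v) ∖ S }`, whose lexicographic minimum is the
landmark distance bound `d^L_bou(v,S)`. -/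
noncomputable def lmBouSet (G' : SimpleGraph V) (R : Set V) (r v : V) (S : Set V) :
    Set LLen :=
  {x | ∃ w, G'.Adj v w ∧ w ∉ S ∧ x = oplus R r (lmDist G' R r w) v}

/-- The subgraph `G[V ∖ R]` obtained by removing all landmarks (landmarks become isolated). -/
def removeLandmarks (G : SimpleGraph V) (R : Set V) : SimpleGraph V where
  Adj u w := G.Adj u w ∧ u ∉ R ∧ w ∉ R
  symm := ⟨fun u w (⟨h, hu, hw⟩ : G.Adj u w ∧ u ∉ R ∧ w ∉ R) => ⟨h.symm, hw, hu⟩⟩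
  loopless := ⟨fun u (⟨h, _, _⟩ : G.Adj u u ∧ u ∉ R ∧ u ∉ R) => G.loopless.irrefl u h⟩

/-!
In a graph `G`, the `r`-label of `v` in the minimal highway cover is `(r, d(r,v))` when `v` is
reachable from `r` and no landmark other than `r` lies on a shortest `r`–`v` path, and there is no
`r`-label otherwise: the labelling keeping exactly such entries is a highway cover, and every
highway cover contains them. The landmark distance `d^L(r,v)` records exactly the same data,
`d(r,v)` together with whether a landmark lies on a shortest path, so a change of either side is a
change of the other.
-/

open SimpleGraph

section Walks

variable {G : SimpleGraph V}

lemma isWalk_support {r v : V} (p : G.Walk r v) : IsWalk G r v p.support :=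
  ⟨p.support_ne_nil, by rw [List.head?_eq_some_head p.support_ne_nil, p.head_support],
    by rw [List.getLast?_eq_getLast_of_ne_nil p.support_ne_nil, p.getLast_support],
    p.isChain_adj_support⟩

lemma isWalk_iff_exists_support_eq {r v : V} {l : List V} :
    IsWalk G r v l ↔ ∃ p : G.Walk r v, p.support = l := by
  refine ⟨fun ⟨hne, hhead, hlast, hchain⟩ => ?_, fun ⟨p, hp⟩ => hp ▸ isWalk_support p⟩
  have hr : l.head hne = r := by simpa [List.head?_eq_some_head hne] using hhead
  have hv : l.getLast hne = v := by simpa [List.getLast?_eq_getLast_of_ne_nil hne] using hlast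
  have hchain : l.IsChain G.Adj := hchain
  exact ⟨(Walk.ofSupport l hne hchain).copy hr hv,
    by rw [Walk.support_copy, Walk.support_ofSupport]⟩

lemma len_support {r v : V} (p : G.Walk r v) : len p.support = p.length := by
  simp [len, Walk.length_support]

lemma sInf_len_isWalk (r v : V) :
    sInf {n | ∃ l, IsWalk G r v l ∧ len l = n} = G.dist r v := by
  rw [dist_eq_sInf]
  congr 1
  ext n
  simp only [Set.mem_ofPred_eq, Set.mem_range, isWalk_iff_exists_support_eq]
  constructor
  · rintro ⟨_, ⟨p, rfl⟩, rfl⟩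
    exact ⟨p, (len_support p).symm⟩
  · rintro ⟨p, rfl⟩
    exact ⟨p.support, ⟨p, rfl⟩, len_support p⟩

lemma edist_add_edist_of_mem_support {u v w : V} {p : G.Walk u v}
    (hp : (p.length : ℕ∞) = G.edist u v) (hw : w ∈ p.support) :
    G.edist u w + G.edist w v = G.edist u v := by
  refine le_antisymm ?_ G.edist_triangle
  calc G.edist u w + G.edist w v
      ≤ (p.takeUntil w hw).length + (p.dropUntil w hw).length :=
        add_le_add (edist_le _) (edist_le _)
    _ = G.edist u v := by rw [← Nat.cast_add, ← Walk.length_append, p.take_spec hw, hp]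

end Walks

/-- The flag of the landmark distance `d^L_G(r,v)`, in terms of distances. -/
def LandmarkOnGeodesic (G : SimpleGraph V) (R : Set V) (r v : V) : Prop :=
  G.Reachable r v ∧ ∃ w ∈ R, w ≠ r ∧ G.edist r w + G.edist w v = G.edist r v

section LandmarkDistance

variable {G : SimpleGraph V} {R : Set V}

lemma landmarkOnGeodesic_iff_exists_walk {r v : V} :
    LandmarkOnGeodesic G R r v ↔
      ∃ p : G.Walk r v, (p.length : ℕ∞) = G.edist r v ∧ ∃ w ∈ p.support, w ∈ R ∧ w ≠ r := by
  constructor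
  · rintro ⟨hreach, w, hwR, hwr, hsum⟩
    have hfin : G.edist r w + G.edist w v ≠ ⊤ :=
      hsum ▸ edist_ne_top_iff_reachable.mpr hreach
    obtain ⟨p, hp⟩ := exists_walk_of_edist_ne_top (WithTop.add_ne_top.mp hfin).1
    obtain ⟨q, hq⟩ := exists_walk_of_edist_ne_top (WithTop.add_ne_top.mp hfin).2
    refine ⟨p.append q, ?_, w, (p.mem_support_append_iff q).mpr (Or.inl p.end_mem_support),
      hwR, hwr⟩
    rw [Walk.length_append, Nat.cast_add, hp, hq, hsum]
  · rintro ⟨p, hp, w, hw, hwR, hwr⟩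
    exact ⟨p.reachable, w, hwR, hwr, edist_add_edist_of_mem_support hp hw⟩

lemma lmDist_eq (G : SimpleGraph V) (R : Set V) (r v : V) :
    lmDist G R r v = WithTop.map (fun d => (d, LandmarkOnGeodesic G R r v)) (G.edist r v) := by
  have hwalk : (∃ l, IsWalk G r v l) ↔ G.Reachable r v := by
    simp only [isWalk_iff_exists_support_eq]
    exact ⟨fun ⟨_, p, _⟩ => ⟨p⟩, fun ⟨p⟩ => ⟨_, p, rfl⟩⟩
  by_cases hreach : G.Reachable r v
  · refine (if_pos (hwalk.mpr hreach)).trans ?_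
    rw [← hreach.coe_dist_eq_edist, sInf_len_isWalk]
    refine congrArg some (Prod.ext rfl (propext ?_))
    rw [landmarkOnGeodesic_iff_exists_walk, ← hreach.coe_dist_eq_edist]
    simp only [isWalk_iff_exists_support_eq, Nat.cast_inj]
    constructor
    · rintro ⟨_, ⟨p, rfl⟩, hlen, hw⟩
      exact ⟨p, len_support p ▸ hlen, hw⟩
    · rintro ⟨p, hlen, hw⟩
      exact ⟨p.support, ⟨p, rfl⟩, (len_support p).trans hlen, hw⟩
  · refine (if_neg (hwalk.not.mpr hreach)).trans ?_
    rw [edist_eq_top_of_not_reachable hreach]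
    rfl

end LandmarkDistance

section HighwayCover

variable {G : SimpleGraph V} {R : Set V}

/- Among the landmarks on shortest `r`–`v` paths take one closest to `v`: a further landmark on a
shortest path from it to `v` would be closer still. -/
lemma exists_landmark_edist_add_edist_eq_not_landmarkOnGeodesic {r v : V} (hr : r ∈ R)
    (hreach : G.Reachable r v) :
    ∃ s ∈ R, G.edist r s + G.edist s v = G.edist r v ∧ ¬LandmarkOnGeodesic G R s v := by
  obtain ⟨s, ⟨hsR, hsum⟩, hmin⟩ :=
    (InvImage.wf (G.edist · v) wellFounded_lt).has_min
      {s ∈ R | G.edist r s + G.edist s v = G.edist r v} ⟨r, hr, by simp⟩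
  refine ⟨s, hsR, hsum, fun ⟨_, w, hwR, hws, hsum'⟩ => hmin w ⟨hwR, ?_⟩ ?_⟩
  · refine le_antisymm ?_ G.edist_triangle
    calc G.edist r w + G.edist w v ≤ G.edist r s + G.edist s w + G.edist w v := by
          gcongr; exact G.edist_triangle
      _ = G.edist r v := by rw [add_assoc, hsum', hsum]
  · have hfin : G.edist r s + G.edist s v ≠ ⊤ :=
      hsum ▸ edist_ne_top_iff_reachable.mpr hreach
    have hwv : G.edist w v ≠ ⊤ :=
      (WithTop.add_ne_top.mp (hsum' ▸ (WithTop.add_ne_top.mp hfin).2)).2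
    calc G.edist w v < G.edist s w + G.edist w v :=
          ENat.lt_add_left hwv (edist_pos_of_ne hws.symm)
      _ = G.edist s v := hsum'

variable (G R) in
def canonicalLabelling : V → Set (V × ℕ∞) := fun v =>
  {x | x.1 ∈ R ∧ x.2 = G.edist x.1 v ∧ x.2 ≠ ⊤ ∧ ¬LandmarkOnGeodesic G R x.1 v}

@[simp]
lemma mem_canonicalLabelling {s v : V} {δ : ℕ∞} :
    (s, δ) ∈ canonicalLabelling G R v ↔
      s ∈ R ∧ δ = G.edist s v ∧ δ ≠ ⊤ ∧ ¬LandmarkOnGeodesic G R s v :=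
  Iff.rfl

lemma isHighwayCover_canonicalLabelling : IsHighwayCover G R (canonicalLabelling G R) := by
  refine ⟨fun v r δ h => ⟨h.1, h.2.1⟩, fun v _ r hr => le_antisymm ?_ ?_⟩
  · refine le_sInf ?_
    rintro _ ⟨s, _, hs, rfl⟩
    obtain ⟨-, rfl, -⟩ := mem_canonicalLabelling.mp hs
    rw [add_comm]
    exact G.edist_triangle
  · by_cases hreach : G.Reachable r v
    · obtain ⟨s, hsR, hsum, hs⟩ :=
        exists_landmark_edist_add_edist_eq_not_landmarkOnGeodesic hr hreach
      have hsv : G.edist s v ≠ ⊤ :=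
        (WithTop.add_ne_top.mp (hsum ▸ edist_ne_top_iff_reachable.mpr hreach)).2
      rw [← hsum, add_comm]
      exact sInf_le ⟨s, _, ⟨hsR, rfl, hsv, hs⟩, rfl⟩
    · rw [edist_eq_top_of_not_reachable hreach]
      exact le_top

/- The infimum defining `d(r,v)` is attained by some label `(s, d(s,v))` with `s` on a shortest
`r`–`v` path, and `s ≠ r` would make `s` a landmark on that path. -/
lemma IsHighwayCover.mem_of_not_landmarkOnGeodesic {L : V → Set (V × ℕ∞)}
    (hL : IsHighwayCover G R L) {r v : V} (hr : r ∈ R) (hv : v ∉ R)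
    (hfin : G.edist r v ≠ ⊤) (hnot : ¬LandmarkOnGeodesic G R r v) :
    (r, G.edist r v) ∈ L v := by
  have hcov := hL.2 v hv r hr
  have hne : {x | ∃ s δ, (s, δ) ∈ L v ∧ x = δ + G.edist r s}.Nonempty :=
    Set.nonempty_iff_ne_empty.mpr fun h => hfin (by rw [hcov, h, sInf_empty])
  obtain ⟨s, δ, hmem, hδ⟩ := csInf_mem hne
  obtain ⟨hsR, rfl⟩ := hL.1 v s δ hmem
  obtain rfl : s = r := by
    by_contra hsr
    exact hnot ⟨reachable_of_edist_ne_top hfin, s, hsR, hsr, by rw [hcov, hδ, add_comm]⟩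
  exact hmem

lemma IsHighwayCover.mem_iff_mem_canonicalLabelling {L : V → Set (V × ℕ∞)}
    (hL : IsHighwayCover G R L) (hmin : ∀ L₂, IsHighwayCover G R L₂ → ∀ u, L u ⊆ L₂ u)
    {r v : V} (hr : r ∈ R) (hv : v ∉ R) {δ : ℕ∞} :
    (r, δ) ∈ L v ↔ (r, δ) ∈ canonicalLabelling G R v :=
  ⟨fun h => hmin _ isHighwayCover_canonicalLabelling v h,
    fun h => by
      obtain ⟨-, rfl, hfin, hnot⟩ := mem_canonicalLabelling.mp h
      exact hL.mem_of_not_landmarkOnGeodesic hr hv hfin hnot⟩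

end HighwayCover

lemma setOf_ne_or_ne_iff_map_ne {α : Type*} {e e' : WithTop α} {p p' : Prop} :
    ({δ | δ = e ∧ δ ≠ ⊤ ∧ ¬p} ≠ {δ | δ = e' ∧ δ ≠ ⊤ ∧ ¬p'} ∨ e ≠ e') ↔
      WithTop.map (·, p) e ≠ WithTop.map (·, p') e' := by
  induction e using WithTop.recTopCoe <;> induction e' using WithTop.recTopCoe
  case coe.coe a b =>
    simp only [ne_eq, Set.ext_iff, Set.mem_ofPred_eq, not_forall, WithTop.coe_inj,
      WithTop.map_coe, Prod.mk.injEq, eq_iff_iff, not_and]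
    constructor
    · rintro (⟨x, hx⟩ | hab) rfl hpp
      · exact hx (by rw [hpp])
      · exact hab rfl
    · intro h
      by_cases hab : a = b
      · subst hab
        exact Or.inl ⟨a, by simpa [not_iff_not] using h rfl⟩
      · exact Or.inr hab
  all_goals simp [Set.ext_iff]

/-- **Lemma 5.** `v` is LD-affected (its `r`-label in the minimal highway cover
labelling changes, or its distance to `r` changes) iff its landmark distance changes:
`d^L_G(r,v) ≠ d^L_{G'}(r,v)`. -/
theorem ld_affected_iff (G G' : SimpleGraph V) (R : Set V) (r v : V)
    (hr : r ∈ R) (hv : v ∉ R)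
    (L L' : V → Set (V × ℕ∞))
    (hL : IsHighwayCover G R L)
    (hminL : ∀ L₂, IsHighwayCover G R L₂ → ∀ u, L u ⊆ L₂ u)
    (hL' : IsHighwayCover G' R L')
    (hminL' : ∀ L₂, IsHighwayCover G' R L₂ → ∀ u, L' u ⊆ L₂ u) :
    ({δ : ℕ∞ | (r, δ) ∈ L v} ≠ {δ : ℕ∞ | (r, δ) ∈ L' v} ∨ G.edist r v ≠ G'.edist r v)
      ↔ lmDist G R r v ≠ lmDist G' R r v := by
  simp only [hL.mem_iff_mem_canonicalLabelling hminL hr hv,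
    hL'.mem_iff_mem_canonicalLabelling hminL' hr hv, mem_canonicalLabelling, hr,
    true_and, lmDist_eq]
  exact setOf_ne_or_ne_iff_map_ne

end BatchHL
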